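/- Let B₀, …, B_{n-1} be pairwise interior-disjoint closed disks in the Euclidean plane with positive radii. Then there exists x ∈ [1,2] such that the number of indices i for which the circle of radius x centered at the origin intersects B_i is at most 4·√n. -/

import Mathlib

/-!
The circle of radius `x` meets the disk `B(p, r)` exactly when `x ∈ [‖p‖ - r, ‖p‖ + r]`, so the
average over `x ∈ [1, 2]` of the number of disks hit is `∑ Lᵢ`, where `Lᵢ` is the length of
`[‖pᵢ‖ - rᵢ, ‖pᵢ‖ + rᵢ] ∩ [1, 2]`. Placing a disk of diameter `Lᵢ` on the ray through `pᵢ` over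
this interval gives disjoint disks inside `B(0, 2)`, so area yields `∑ Lᵢ² ≤ 16`, and
Cauchy–Schwarz gives `∑ Lᵢ ≤ 4 √n`; some `x` is at most the average.
-/

open MeasureTheory Metric Set Module

section Radial

variable {E : Type*} [NormedAddCommGroup E] [NormedSpace ℝ E]

theorem exists_norm_eq_one_and_eq_norm_smul [Nontrivial E] (p : E) :
    ∃ u : E, ‖u‖ = 1 ∧ p = ‖p‖ • u := by
  rcases eq_or_ne p 0 with rfl | hp
  · obtain ⟨u, hu⟩ := exists_norm_eq E zero_le_one
    exact ⟨u, hu, by simp⟩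
  · exact ⟨‖p‖⁻¹ • p, by simp [norm_smul, hp], by simp [smul_smul, hp]⟩

variable {u p : E}

theorem dist_smul_of_eq_norm_smul (hu : ‖u‖ = 1) (hp : p = ‖p‖ • u) (t : ℝ) :
    dist (t • u) p = |t - ‖p‖| := by
  conv_lhs => rw [hp]
  rw [dist_eq_norm, ← sub_smul, norm_smul, hu, mul_one, Real.norm_eq_abs]

theorem ball_midpoint_smul_subset_ball (hu : ‖u‖ = 1) (hp : p = ‖p‖ • u) {a b r : ℝ}
    (ha : ‖p‖ - r ≤ a) (hb : b ≤ ‖p‖ + r) :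
    ball (((a + b) / 2) • u) ((b - a) / 2) ⊆ ball p r := by
  refine ball_subset_ball' ?_
  rw [dist_smul_of_eq_norm_smul hu hp, ← le_sub_iff_add_le', abs_le]
  constructor <;> linarith

theorem sphere_inter_closedBall_nonempty_iff [Nontrivial E] {x : ℝ} (hx : 0 ≤ x) (p : E) (r : ℝ) :
    (sphere (0 : E) x ∩ closedBall p r).Nonempty ↔ x ∈ Icc (‖p‖ - r) (‖p‖ + r) := by
  rw [mem_Icc, ← sub_le_iff_le_add', sub_le_comm, ← abs_sub_le_iff]
  constructor
  · rintro ⟨y, hy, hyp⟩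
    rw [mem_sphere_zero_iff_norm] at hy
    rw [abs_sub_comm, ← hy]
    exact (abs_norm_sub_norm_le y p).trans (mem_closedBall_iff_norm.1 hyp)
  · intro h
    obtain ⟨u, hu, hpu⟩ := exists_norm_eq_one_and_eq_norm_smul p
    refine ⟨x • u, ?_, ?_⟩
    · simp [norm_smul, hu, abs_of_nonneg hx]
    · rw [mem_closedBall, dist_smul_of_eq_norm_smul hu hpu, abs_sub_comm]
      exact h

theorem exists_ball_subset_ball_inter_ball [Nontrivial E] (p : E) (r : ℝ) {a b : ℝ}
    (ha : 0 ≤ a) :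
    ∃ c : E, ball c (volume.real (Icc (‖p‖ - r) (‖p‖ + r) ∩ Icc a b) / 2) ⊆
      ball p r ∩ ball 0 b := by
  obtain ⟨u, hu, hpu⟩ := exists_norm_eq_one_and_eq_norm_smul p
  rw [Icc_inter_Icc, Real.volume_real_Icc]
  set a' := max (‖p‖ - r) a
  set b' := min (‖p‖ + r) b
  rcases le_total b' a' with hba | hab
  · exact ⟨0, by simp [max_eq_right (sub_nonpos.2 hba)]⟩
  have ha' : a ≤ a' := le_max_right _ _
  have hb' : b' ≤ b := min_le_right _ _
  rw [max_eq_left (sub_nonneg.2 hab)]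
  refine ⟨((a' + b') / 2) • u, subset_inter ?_ ?_⟩
  · exact ball_midpoint_smul_subset_ball hu hpu (le_max_left _ _) (min_le_left _ _)
  · exact ball_midpoint_smul_subset_ball hu (by simp) (by rw [norm_zero]; linarith)
      (by rwa [norm_zero, zero_add])

end Radial

section Averaging

variable {α ι : Type*} [MeasurableSpace α] [Fintype ι]

theorem exists_ncard_mem_mul_le_sum_measureReal {μ : Measure α} {s : Set α}
    (hs₀ : μ s ≠ 0) (hs : μ s ≠ ⊤) {A : ι → Set α} (hA : ∀ i, MeasurableSet (A i)) :
    ∃ x ∈ s, ({i | x ∈ A i}.ncard : ℝ) * μ.real s ≤ ∑ i, μ.real (A i ∩ s) := by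
  classical
  have hcount : ∀ x, ({i | x ∈ A i}.ncard : ℝ) = ∑ i, (A i).indicator 1 x := by
    intro x
    rw [Set.ncard_eq_toFinset_card', Set.toFinset_ofPred, Finset.card_filter, Nat.cast_sum]
    simp [Set.indicator_apply]
  have hint : ∀ i, IntegrableOn ((A i).indicator (1 : α → ℝ)) s μ := fun i =>
    (integrableOn_const hs).indicator (hA i)
  obtain ⟨x, hxs, hx⟩ := exists_le_setAverage hs₀ hs (integrable_finsetSum _ fun i _ => hint i)
  refine ⟨x, hxs, ?_⟩
  rw [setAverage_eq, integral_finsetSum _ fun i _ => hint i, smul_eq_mul] at hx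
  simp only [integral_indicator_one (hA _), measureReal_restrict_apply (hA _)] at hx
  rw [hcount]
  have hpos : 0 < μ.real s := ENNReal.toReal_pos hs₀ hs
  calc _ ≤ (μ.real s)⁻¹ * (∑ i, μ.real (A i ∩ s)) * μ.real s := by gcongr
    _ = _ := by field_simp

end Averaging

theorem sum_pow_finrank_le_of_pairwise_disjoint_ball_subset_ball
    {E ι : Type*} [NormedAddCommGroup E] [NormedSpace ℝ E] [FiniteDimensional ℝ E]
    [Nontrivial E] [MeasurableSpace E] [BorelSpace E] [Fintype ι]
    {c : ι → E} {ρ : ι → ℝ} (hρ : ∀ i, 0 ≤ ρ i)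
    (hdisj : Pairwise fun i j => Disjoint (ball (c i) (ρ i)) (ball (c j) (ρ j)))
    {x : E} {R : ℝ} (hR : 0 ≤ R) (hsub : ∀ i, ball (c i) (ρ i) ⊆ ball x R) :
    ∑ i, ρ i ^ finrank ℝ E ≤ R ^ finrank ℝ E := by
  let μ : Measure E := Measure.addHaar
  have hvol : ∑ i, μ (ball (c i) (ρ i)) ≤ μ (ball x R) := by
    rw [← tsum_fintype (L := .unconditional ι), ← measure_iUnion hdisj fun _ => measurableSet_ball]
    exact measure_mono (iUnion_subset hsub)
  simp only [Measure.addHaar_ball μ _ (hρ _), Measure.addHaar_ball μ _ hR, ← Finset.sum_mul,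
    ← ENNReal.ofReal_sum_of_nonneg fun i _ => pow_nonneg (hρ i) _] at hvol
  rwa [ENNReal.mul_le_mul_iff_left (measure_ball_pos μ _ one_pos).ne' measure_ball_lt_top.ne,
    ENNReal.ofReal_le_ofReal_iff (pow_nonneg hR _)] at hvol

theorem sum_le_mul_sqrt_card_of_sum_sq_le {ι : Type*} [Fintype ι] {L : ι → ℝ} {C : ℝ}
    (hC : 0 ≤ C) (h : ∑ i, L i ^ 2 ≤ C ^ 2) : ∑ i, L i ≤ C * √(Fintype.card ι) := by
  rw [← Real.sqrt_sq hC, ← Real.sqrt_mul (sq_nonneg C)]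
  apply Real.le_sqrt_of_sq_le
  calc (∑ i, L i) ^ 2 ≤ Fintype.card ι * ∑ i, L i ^ 2 := by
        simpa using sq_sum_le_card_mul_sum_sq (s := Finset.univ) (f := L)
    _ ≤ C ^ 2 * Fintype.card ι := by rw [mul_comm]; gcongr

theorem sum_measureReal_Icc_inter_Icc_le_of_pairwise_disjoint
    {ι : Type*} [Fintype ι] {p : ι → EuclideanSpace ℝ (Fin 2)} {r : ι → ℝ}
    (hdisj : Pairwise fun i j => Disjoint (ball (p i) (r i)) (ball (p j) (r j)))
    {a b : ℝ} (ha : 0 ≤ a) (hb : 0 ≤ b) :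
    ∑ i, volume.real (Icc (‖p i‖ - r i) (‖p i‖ + r i) ∩ Icc a b) ≤
      2 * b * √(Fintype.card ι) := by
  set L : ι → ℝ := fun i => volume.real (Icc (‖p i‖ - r i) (‖p i‖ + r i) ∩ Icc a b)
  choose c hc using fun i => exists_ball_subset_ball_inter_ball (p i) (r i) (b := b) ha
  have hpacking : ∑ i, (L i / 2) ^ 2 ≤ b ^ 2 := by
    simpa using sum_pow_finrank_le_of_pairwise_disjoint_ball_subset_ball
      (fun i => by positivity)
      (fun i j hij => (hdisj hij).mono ((hc i).trans inter_subset_left)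
        ((hc j).trans inter_subset_left)) hb fun i => (hc i).trans inter_subset_right
  refine sum_le_mul_sqrt_card_of_sum_sq_le (by positivity) ?_
  simp only [div_pow, ← Finset.sum_div] at hpacking
  linarith

theorem exists_radius_few_disks_hit_general
    (n : ℕ) (p : Fin n → EuclideanSpace ℝ (Fin 2)) (r : Fin n → ℝ)
    (hdisj : Pairwise fun i j =>
      Disjoint (Metric.ball (p i) (r i)) (Metric.ball (p j) (r j))) :
    ∃ x ∈ Set.Icc (1 : ℝ) 2,
      (({i : Fin n | (Metric.sphere (0 : EuclideanSpace ℝ (Fin 2)) x ∩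
        Metric.closedBall (p i) (r i)).Nonempty}).ncard : ℝ) ≤ 4 * Real.sqrt n := by
  obtain ⟨x, hx, hcount⟩ := exists_ncard_mem_mul_le_sum_measureReal (μ := volume)
    (s := Icc (1 : ℝ) 2) (A := fun i => Icc (‖p i‖ - r i) (‖p i‖ + r i)) (by simp) (by simp)
    fun _ => measurableSet_Icc
  refine ⟨x, hx, ?_⟩
  have hhit : {i | (sphere (0 : EuclideanSpace ℝ (Fin 2)) x ∩ closedBall (p i) (r i)).Nonempty}
      = {i | x ∈ Icc (‖p i‖ - r i) (‖p i‖ + r i)} := by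
    ext i
    exact sphere_inter_closedBall_nonempty_iff (zero_le_one.trans hx.1) (p i) (r i)
  have hsum := sum_measureReal_Icc_inter_Icc_le_of_pairwise_disjoint hdisj zero_le_one zero_le_two
  rw [hhit]
  calc _ = _ * volume.real (Icc (1 : ℝ) 2) := by norm_num
    _ ≤ 2 * 2 * √(Fintype.card (Fin n)) := hcount.trans hsum
    _ = 4 * √n := by norm_num

/-- For pairwise interior-disjoint closed disks of positive radii in the plane, there
is a radius `x ∈ [1,2]` such that at most `4 √n` of the disks meet the circle of
radius `x` centered at the origin. -/
theorem exists_radius_few_disks_hit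
    (n : ℕ) (p : Fin n → EuclideanSpace ℝ (Fin 2)) (r : Fin n → ℝ)
    (hr : ∀ i, 0 < r i)
    (hdisj : Pairwise fun i j =>
      Disjoint (Metric.ball (p i) (r i)) (Metric.ball (p j) (r j))) :
    ∃ x ∈ Set.Icc (1 : ℝ) 2,
      (({i : Fin n | (Metric.sphere (0 : EuclideanSpace ℝ (Fin 2)) x ∩
        Metric.closedBall (p i) (r i)).Nonempty}).ncard : ℝ) ≤ 4 * Real.sqrt n :=
  exists_radius_few_disks_hit_general n p r hdisj
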